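/- Let G be a finite connected simple graph. Then the Steinerberger boundary satisfies |∂G| = 3 if and only if the CEJZ boundary satisfies |(∂G)'| = 3. -/

import Mathlib

open Finset

variable {V : Type*}

/-- The Steinerberger boundary of a graph. -/
def sBoundary (G : SimpleGraph V) [Fintype V] [DecidableRel G.Adj] : Set V :=
  if Fintype.card V = 1 then Set.univ
  else {v | ∃ u : V, ∑ w ∈ G.neighborFinset v, G.dist w u < G.degree v * G.dist v u}

/-- The Chartrand–Erwin–Johns–Zhang boundary of a graph. -/
def cBoundary (G : SimpleGraph V) : Set V :=
  {v | ∃ u : V, ∀ w : V, G.Adj v w → G.dist w u ≤ G.dist v u}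

section Aux

variable [Fintype V] {G : SimpleGraph V}

omit [Fintype V] in
/-- Adjacent vertices have distance 1 (in a connected graph, in particular). -/
private lemma adj_dist_le {v w u : V} (hc : G.Connected) (h : G.Adj v w) :
    G.dist v u ≤ G.dist w u + 1 := by
  have h1 : G.dist v w = 1 := SimpleGraph.dist_eq_one_iff_adj.mpr h
  have := hc.dist_triangle (u := v) (v := w) (w := u)
  omega

omit [Fintype V] in
/-- Every vertex not in the CEJZ boundary has, for each pole `u`, a strictly
farther neighbor. -/
private lemma exists_farther_of_not_cBoundary {v : V} (hv : v ∉ cBoundary G) (u : V) :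
    ∃ w : V, G.Adj v w ∧ G.dist v u < G.dist w u := by
  simp only [cBoundary, Set.mem_setOf_eq, not_exists, not_forall] at hv
  obtain ⟨w, hadj, hlt⟩ := hv u
  exact ⟨w, hadj, by omega⟩

/-- Geodesic extension: beyond any vertex `v` (as seen from `u`) there is a
CEJZ boundary vertex `b` with `v` on a `u`–`b` geodesic. -/
private lemma exists_cBoundary_extend (hc : G.Connected) (u v : V) :
    ∃ b ∈ cBoundary G, G.dist u b = G.dist u v + G.dist v b := by
  suffices h : ∀ k, ∀ v : V, Fintype.card V ≤ G.dist u v + k →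
      ∃ b ∈ cBoundary G, G.dist u b = G.dist u v + G.dist v b by
    exact h (Fintype.card V) v (Nat.le_add_left _ _)
  intro k
  induction k with
  | zero =>
    intro v hk
    obtain ⟨p, hp, hlen⟩ := hc.exists_path_of_dist u v
    have := hp.length_lt
    omega
  | succ k ih =>
    intro v hk
    by_cases hv : v ∈ cBoundary G
    · exact ⟨v, hv, by simp [SimpleGraph.dist_self]⟩
    · obtain ⟨w, hadj, hlt⟩ := exists_farther_of_not_cBoundary hv u
      have hle : G.dist w u ≤ G.dist v u + 1 :=
        adj_dist_le hc (G.adj_symm hadj)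
      have hw : G.dist u w = G.dist u v + 1 := by
        have c1 : G.dist u w = G.dist w u := SimpleGraph.dist_comm ..
        have c2 : G.dist u v = G.dist v u := SimpleGraph.dist_comm ..
        omega
      obtain ⟨b, hb, hbd⟩ := ih w (by omega)
      refine ⟨b, hb, ?_⟩
      have h1 : G.dist u b ≤ G.dist u v + G.dist v b := hc.dist_triangle
      have h2 : G.dist v b ≤ G.dist w b + 1 := by
        have h3 : G.dist v w = 1 := SimpleGraph.dist_eq_one_iff_adj.mpr hadj
        have := hc.dist_triangle (u := v) (v := w) (w := b)
        omega
      omega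

omit [Fintype V] in
/-- On a geodesic from `v` to `u ≠ v` there is a neighbor of `v` strictly closer
to `u`. -/
private lemma exists_adj_closer (hc : G.Connected) {v u : V} (h : v ≠ u) :
    ∃ w : V, G.Adj v w ∧ G.dist w u + 1 = G.dist v u := by
  obtain ⟨p, hp, hlen⟩ := hc.exists_path_of_dist v u
  cases p with
  | nil => exact absurd rfl h
  | @cons _ w _ hadj q =>
    refine ⟨w, hadj, ?_⟩
    have h1 : G.dist w u ≤ q.length := SimpleGraph.dist_le q
    have h2 : G.dist v u ≤ G.dist w u + 1 := adj_dist_le hc hadj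
    simp only [SimpleGraph.Walk.length_cons] at hlen
    omega

/-- The CEJZ boundary is contained in the Steinerberger boundary. -/
private lemma cBoundary_subset_sBoundary [DecidableRel G.Adj] (hc : G.Connected) :
    cBoundary G ⊆ sBoundary G := by
  intro v hv
  unfold sBoundary
  split_ifs with h1
  · trivial
  · obtain ⟨u, hu⟩ := hv
    have hvu : v ≠ u := by
      rintro rfl
      have hcard : 1 < Fintype.card V := by
        have : 0 < Fintype.card V := Fintype.card_pos_iff.mpr ⟨v⟩
        omega
      obtain ⟨u', hu'⟩ := Fintype.exists_ne_of_one_lt_card hcard v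
      obtain ⟨w, hadj, _⟩ := exists_adj_closer hc (Ne.symm hu')
      have h2 := hu w hadj
      have h3 : w ≠ v := fun e => G.irrefl (e ▸ hadj)
      have h5 : 0 < G.dist w v := hc.pos_dist_of_ne h3
      have h4 : G.dist v v = 0 := SimpleGraph.dist_self ..
      omega
    obtain ⟨w0, hw0adj, hw0⟩ := exists_adj_closer hc hvu
    have hpos : 0 < G.dist v u := hc.pos_dist_of_ne hvu
    refine ⟨u, ?_⟩
    have hlt : ∑ w ∈ G.neighborFinset v, G.dist w u <
        ∑ _w ∈ G.neighborFinset v, G.dist v u := by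
      apply Finset.sum_lt_sum
      · intro w hw
        exact hu w ((G.mem_neighborFinset v w).mp hw)
      · exact ⟨w0, (G.mem_neighborFinset v w0).mpr hw0adj, by omega⟩
    rw [Finset.sum_const, smul_eq_mul, SimpleGraph.card_neighborFinset_eq_degree] at hlt
    exact hlt

/-- Main lemma: if the CEJZ boundary has at most 3 vertices, then the
Steinerberger boundary is contained in it. -/
private lemma sBoundary_subset_cBoundary [DecidableRel G.Adj] (hc : G.Connected)
    (h3 : (cBoundary G).ncard ≤ 3) : sBoundary G ⊆ cBoundary G := by
  classical
  intro v hv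
  by_contra hvB
  unfold sBoundary at hv
  split_ifs at hv with h1
  · -- one-vertex graph: v is trivially in the CEJZ boundary
    apply hvB
    refine ⟨v, fun w hw => ?_⟩
    obtain ⟨x, hx⟩ := Fintype.card_eq_one_iff.mp h1
    have : w = v := (hx w).trans (hx v).symm
    subst this
    exact absurd hw (G.irrefl)
  obtain ⟨u, hu⟩ := hv
  -- transfer the Steinerberger witness to a CEJZ boundary vertex x
  obtain ⟨x, hxB, hxd⟩ := exists_cBoundary_extend hc v u
  have hwit : ∑ w ∈ G.neighborFinset v, G.dist w x < G.degree v * G.dist v x := by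
    have hb : ∑ w ∈ G.neighborFinset v, G.dist w x ≤
        ∑ w ∈ G.neighborFinset v, (G.dist w u + G.dist u x) :=
      Finset.sum_le_sum fun w _ => hc.dist_triangle
    rw [Finset.sum_add_distrib, Finset.sum_const, smul_eq_mul,
      SimpleGraph.card_neighborFinset_eq_degree] at hb
    have : G.degree v * G.dist v x =
        G.degree v * G.dist v u + G.degree v * G.dist u x := by
      rw [hxd, Nat.mul_add]
    omega
  have hvx : v ≠ x := fun h => hvB (h ▸ hxB)
  set d := G.dist v x with hd
  have hdpos : 0 < d := hc.pos_dist_of_ne hvx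
  -- a strictly farther neighbor from x
  obtain ⟨wp, hwpadj, hwp⟩ := exists_farther_of_not_cBoundary hvB x
  -- the set of strictly closer neighbors has at least two elements
  set A := (G.neighborFinset v).filter (fun w => G.dist w x < d) with hA
  have hAsub : A ⊆ G.neighborFinset v := Finset.filter_subset _ _
  have hA2 : 2 ≤ A.card := by
    have hkey : G.degree v * d <
        ∑ w ∈ G.neighborFinset v, (G.dist w x + if w ∈ A then 1 else 0) := by
      have : ∑ _w ∈ G.neighborFinset v, d <
          ∑ w ∈ G.neighborFinset v, (G.dist w x + if w ∈ A then 1 else 0) := by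
        apply Finset.sum_lt_sum
        · intro w hw
          have hadj : G.Adj v w := (G.mem_neighborFinset v w).mp hw
          have htri : d ≤ G.dist w x + 1 := adj_dist_le hc hadj
          by_cases hwA : w ∈ A
          · simp only [hwA, if_true]; omega
          · have : ¬ G.dist w x < d := by
              intro hlt
              exact hwA (Finset.mem_filter.mpr ⟨hw, hlt⟩)
            simp only [hwA, if_false]; omega
        · refine ⟨wp, (G.mem_neighborFinset v wp).mpr hwpadj, ?_⟩
          have hwpA : wp ∉ A := by
            intro hmem
            have := (Finset.mem_filter.mp hmem).2
            omega
          simp only [hwpA, if_false]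
          omega
      rwa [Finset.sum_const, smul_eq_mul, SimpleGraph.card_neighborFinset_eq_degree] at this
    rw [Finset.sum_add_distrib] at hkey
    have hcount : ∑ w ∈ G.neighborFinset v, (if w ∈ A then 1 else 0) = A.card := by
      have hfe : (G.neighborFinset v).filter (fun w => w ∈ A) = A := by
        rw [Finset.filter_mem_eq_inter, Finset.inter_eq_right.mpr hAsub]
      rw [← Finset.sum_filter, hfe]
      simp
    rw [hcount] at hkey
    omega
  -- two distinct closer neighbors
  obtain ⟨w1, hw1A, w2, hw2A, hw12⟩ := Finset.one_lt_card.mp (by omega : 1 < A.card)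
  have hw1adj : G.Adj v w1 := (G.mem_neighborFinset v w1).mp (hAsub hw1A)
  have hw2adj : G.Adj v w2 := (G.mem_neighborFinset v w2).mp (hAsub hw2A)
  have hdist1 : G.dist w1 x + 1 = d := by
    have hlt := (Finset.mem_filter.mp hw1A).2
    have := adj_dist_le (u := x) hc hw1adj
    omega
  have hdist2 : G.dist w2 x + 1 = d := by
    have hlt := (Finset.mem_filter.mp hw2A).2
    have := adj_dist_le (u := x) hc hw2adj
    omega
  -- a CEJZ boundary vertex y beyond v as seen from x
  obtain ⟨y, hyB, hyd⟩ := exists_cBoundary_extend hc x v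
  have hvy : v ≠ y := fun h => hvB (h ▸ hyB)
  have hvypos : 0 < G.dist v y := hc.pos_dist_of_ne hvy
  have hxv : G.dist x v = d := by rw [hd, SimpleGraph.dist_comm]
  have hxy : x ≠ y := by
    intro h
    subst h
    rw [SimpleGraph.dist_self, hxv] at hyd
    omega
  -- both w1 and w2 are at distance (dist v y + 1) from y
  have hydist : ∀ w : V, G.Adj v w → G.dist w x + 1 = d → G.dist w y = G.dist v y + 1 := by
    intro w hadj hwx
    have hub : G.dist w y ≤ G.dist v y + 1 := by
      have h3 : G.dist w v = 1 := SimpleGraph.dist_eq_one_iff_adj.mpr (G.adj_symm hadj)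
      have := hc.dist_triangle (u := w) (v := v) (w := y)
      omega
    have hlb : G.dist x y ≤ G.dist x w + G.dist w y := hc.dist_triangle
    have hxw : G.dist x w = G.dist w x := SimpleGraph.dist_comm ..
    omega
  have hy1 : G.dist w1 y = G.dist v y + 1 := hydist w1 hw1adj hdist1
  have hy2 : G.dist w2 y = G.dist v y + 1 := hydist w2 hw2adj hdist2
  -- extend geodesics from w2 through w1 and from w1 through w2
  obtain ⟨b1, hb1B, hb1⟩ := exists_cBoundary_extend hc w2 w1
  obtain ⟨b2, hb2B, hb2⟩ := exists_cBoundary_extend hc w1 w2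
  have hwpos : 0 < G.dist w1 w2 := hc.pos_dist_of_ne hw12
  have hww : G.dist w2 w1 = G.dist w1 w2 := SimpleGraph.dist_comm ..
  -- distinctness of x, y, b1, b2
  have hb1x : b1 ≠ x := by
    rintro rfl
    omega
  have hb1y : b1 ≠ y := by
    rintro rfl
    omega
  have hb2x : b2 ≠ x := by
    rintro rfl
    omega
  have hb2y : b2 ≠ y := by
    rintro rfl
    omega
  have hb12 : b1 ≠ b2 := by
    rintro rfl
    omega
  -- four distinct CEJZ boundary vertices
  have hsub : ({x, y, b1, b2} : Set V) ⊆ cBoundary G := by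
    intro z hz
    simp only [Set.mem_insert_iff, Set.mem_singleton_iff] at hz
    rcases hz with rfl | rfl | rfl | rfl
    exacts [hxB, hyB, hb1B, hb2B]
  have hcard4 : ({x, y, b1, b2} : Set V).ncard = 4 := by
    rw [Set.ncard_insert_of_notMem (by simp [hxy, hb1x.symm, hb2x.symm])
        (Set.toFinite _),
      Set.ncard_insert_of_notMem (by simp [hb1y.symm, hb2y.symm]) (Set.toFinite _),
      Set.ncard_pair hb12]
  have hle : ({x, y, b1, b2} : Set V).ncard ≤ (cBoundary G).ncard :=
    Set.ncard_le_ncard hsub (Set.toFinite _)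
  omega

end Aux

theorem sBoundary_card_three_iff_cBoundary_card_three [Fintype V] (G : SimpleGraph V)
    [DecidableRel G.Adj] (hc : G.Connected) :
    (sBoundary G).ncard = 3 ↔ (cBoundary G).ncard = 3 := by
  have hsub := cBoundary_subset_sBoundary (G := G) hc
  constructor
  · intro h
    have hle : (cBoundary G).ncard ≤ (sBoundary G).ncard :=
      Set.ncard_le_ncard hsub (Set.toFinite _)
    have heq : sBoundary G = cBoundary G :=
      Set.Subset.antisymm (sBoundary_subset_cBoundary hc (by omega)) hsub
    rw [← heq]; exact h
  · intro h
    have heq : sBoundary G = cBoundary G :=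
      Set.Subset.antisymm (sBoundary_subset_cBoundary hc (by omega)) hsub
    rw [heq]; exact h
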